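/- In the Gibbs distribution over monotone alignments, p(φ) = e^{−Σ_k cost(φ(k),k)} / Z with Z = Σ_φ e^{−Σ_k cost(φ(k),k)}, the marginal probability that z_j aligns to x_i equals w_{i,j} = f_{i,j}·b_{i,j}/(c_{i,j}·Z), where c_{i,j} = e^{−cost(i,j)} and f, b are the forward and backward partition functions; and the expected total cost satisfies E_φ[Σ_k cost(φ(k),k)] = Σ_{i,j} w_{i,j}·cost(i,j). -/

import Mathlib

open scoped Classical

/-- Forward partition function of monotone alignments (see context): sum over strictly
increasing `φ : {1,…,j} → {1,…,i}` with `φ j = i` of `∏_{k≤j} c (φ k) k`. -/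
noncomputable def fwd (c : ℕ → ℕ → ℝ) (i j : ℕ) : ℝ :=
  ∑ φ ∈ Finset.univ.filter
      (fun φ : Fin j → Fin i =>
        StrictMono φ ∧ ∀ k : Fin j, (k : ℕ) = j - 1 → ((φ k : Fin i) : ℕ) = i - 1),
    ∏ k : Fin j, c ((φ k : ℕ) + 1) ((k : ℕ) + 1)

/-- Backward partition function of monotone alignments: sum over strictly increasing
`ψ : {j,…,N} → {i,…,T}` with `ψ j = i`, `ψ N = T` of `∏_{k≥j} c (ψ k) k`. -/
noncomputable def bwd (c : ℕ → ℕ → ℝ) (T N i j : ℕ) : ℝ :=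
  ∑ ψ ∈ Finset.univ.filter
      (fun ψ : Fin (N - j + 1) → Fin (T - i + 1) =>
        StrictMono ψ ∧ (∀ k : Fin (N - j + 1), (k : ℕ) = 0 → ((ψ k : Fin (T - i + 1)) : ℕ) = 0)
          ∧ (∀ k : Fin (N - j + 1), (k : ℕ) = N - j → ((ψ k : Fin (T - i + 1)) : ℕ) = T - i)),
    ∏ k : Fin (N - j + 1), c (i + (ψ k : ℕ)) (j + (k : ℕ))

/-!
An alignment through `(i, j)` is a forward path ending at `(i, j)` followed by a backward path
starting there, the two sharing the step `(i, j)`. Cutting an alignment at step `j` and gluing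
two such paths are inverse bijections, and the weight of an alignment times `c i j` is the
product of the weights of its halves; dividing by `Z` gives the marginals. The total cost is a
sum over steps, so grouping alignments by the frame that step `j` visits writes its expectation
through the marginals.
-/

open Finset

lemma Finset.sum_Icc_one_eq_sum_fin {M : Type*} [AddCommMonoid M] (f : ℕ → M) (n : ℕ) :
    ∑ i ∈ Icc 1 n, f i = ∑ k : Fin n, f (k + 1) := by
  rw [Fin.sum_univ_eq_sum_range (fun k => f (k + 1)), range_eq_Ico, sum_Ico_add' f, zero_add,
    Ico_add_one_right_eq_Icc]

lemma Finset.sum_mul_sum_eq_sum_sum_fiber_mul {κ α R : Type*} [Fintype κ] [Fintype α]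
    [DecidableEq α] [NonUnitalNonAssocSemiring R] (s : Finset (κ → α)) (q : (κ → α) → R)
    (g : α → κ → R) :
    ∑ φ ∈ s, q φ * ∑ k, g (φ k) k =
      ∑ k, ∑ a, (∑ φ ∈ s with φ k = a, q φ) * g a k := by
  simp_rw [mul_sum, sum_mul]
  rw [sum_comm]
  refine sum_congr rfl fun k _ => ?_
  rw [← sum_fiberwise s (fun φ => φ k)]
  exact sum_congr rfl fun a _ => sum_congr rfl fun φ hφ => by rw [(mem_filter.1 hφ).2]

section MonotoneFin

variable {n m : ℕ} {φ : Fin n → Fin m}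

lemma StrictMono.val_lt_val_mk (hφ : StrictMono φ) {a b : ℕ} (ha : a < n) (hb : b < n)
    (hab : a < b) : (φ ⟨a, ha⟩ : ℕ) < φ ⟨b, hb⟩ :=
  hφ hab

lemma Monotone.val_le_val_mk (hφ : Monotone φ) {a b : ℕ} (ha : a < n) (hb : b < n)
    (hab : a ≤ b) : (φ ⟨a, ha⟩ : ℕ) ≤ φ ⟨b, hb⟩ :=
  hφ hab

end MonotoneFin

lemma Fin.forall_val_eq_imp_iff {n a : ℕ} (ha : a < n) {P : Fin n → Prop} :
    (∀ k : Fin n, (k : ℕ) = a → P k) ↔ P ⟨a, ha⟩ :=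
  ⟨fun h => h _ rfl, fun h k hk => by obtain rfl : k = ⟨a, ha⟩ := Fin.ext hk; exact h⟩

lemma Finset.mul_prod_range_eq_prod_range_succ_mul_prod_Ico {M : Type*} [CommMonoid M]
    (f : ℕ → M) {m n : ℕ} (h : m ≤ n) :
    f m * ∏ k ∈ range n, f k = (∏ k ∈ range (m + 1), f k) * ∏ k ∈ Ico m n, f k := by
  rw [prod_range_succ, ← prod_range_mul_prod_Ico f h]
  ac_rfl

section Split

variable {T N i j : ℕ}

/-- The first `j` steps of an alignment, as an alignment into the first `i` frames. The clamp
only makes the map total: it does nothing on alignments with `φ (j - 1) = i - 1`. -/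
def alignPrefix (hi : 1 ≤ i) (hjN : j ≤ N) (φ : Fin N → Fin T) : Fin j → Fin i :=
  fun k => ⟨min (φ ⟨k, k.2.trans_le hjN⟩ : ℕ) (i - 1), by omega⟩

/-- The steps `j, …, N` of an alignment, shifted to start at frame `0`; the clamp is again
inert on alignments with `φ (j - 1) = i - 1`. -/
def alignSuffix (hj : 1 ≤ j) (hjN : j ≤ N) (φ : Fin N → Fin T) :
    Fin (N - j + 1) → Fin (T - i + 1) :=
  fun m => ⟨min (φ ⟨j - 1 + m, by omega⟩ - (i - 1)) (T - i), by omega⟩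

def alignGlue (hi : 1 ≤ i) (hiT : i ≤ T) (α : Fin j → Fin i)
    (β : Fin (N - j + 1) → Fin (T - i + 1)) : Fin N → Fin T :=
  fun k => if h : (k : ℕ) < j then Fin.castLE hiT (α ⟨k, h⟩)
    else ⟨i - 1 + β ⟨k - (j - 1), by omega⟩, by omega⟩

section Through

variable (hj : 1 ≤ j) (hjN : j ≤ N) {φ : Fin N → Fin T}

lemma alignPrefix_val (hi : 1 ≤ i) (hφ : Monotone φ)
    (hφij : (φ ⟨j - 1, Nat.sub_one_lt_of_le hj hjN⟩ : ℕ) = i - 1) (k : Fin j) :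
    (alignPrefix hi hjN φ k : ℕ) = φ ⟨k, k.2.trans_le hjN⟩ := by
  have := hφ.val_le_val_mk (k.2.trans_le hjN) (by omega : j - 1 < N) (by omega)
  simp only [alignPrefix]
  omega

lemma alignSuffix_val (hφ : Monotone φ)
    (hφij : (φ ⟨j - 1, Nat.sub_one_lt_of_le hj hjN⟩ : ℕ) = i - 1)
    (m : Fin (N - j + 1)) :
    (alignSuffix (i := i) hj hjN φ m : ℕ) = φ ⟨j - 1 + m, by omega⟩ - (i - 1) := by
  have := hφ.val_le_val_mk (by omega : j - 1 < N) (by omega : j - 1 + m < N) (by omega)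
  have := (φ ⟨j - 1 + m, by omega⟩).2
  simp only [alignSuffix]
  omega

lemma alignPrefix_strictMono (hi : 1 ≤ i) (hφ : StrictMono φ)
    (hφij : (φ ⟨j - 1, Nat.sub_one_lt_of_le hj hjN⟩ : ℕ) = i - 1) :
    StrictMono (alignPrefix hi hjN φ) := fun a b hab => by
  rw [Fin.lt_def, alignPrefix_val hj hjN hi hφ.monotone hφij,
    alignPrefix_val hj hjN hi hφ.monotone hφij]
  exact hφ.val_lt_val_mk _ _ hab

lemma alignPrefix_last (hi : 1 ≤ i) (hφ : Monotone φ)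
    (hφij : (φ ⟨j - 1, Nat.sub_one_lt_of_le hj hjN⟩ : ℕ) = i - 1) :
    (alignPrefix hi hjN φ ⟨j - 1, by omega⟩ : ℕ) = i - 1 := by
  rw [alignPrefix_val hj hjN hi hφ hφij]
  exact hφij

lemma alignSuffix_strictMono (hφ : StrictMono φ)
    (hφij : (φ ⟨j - 1, Nat.sub_one_lt_of_le hj hjN⟩ : ℕ) = i - 1) :
    StrictMono (alignSuffix (i := i) hj hjN φ) := fun a b hab => by
  rw [Fin.lt_def] at hab ⊢
  have := hφ.val_lt_val_mk (by omega) (by omega) (by omega : j - 1 + (a : ℕ) < j - 1 + b)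
  have := hφ.monotone.val_le_val_mk (by omega : j - 1 < N) (by omega : j - 1 + (a : ℕ) < N)
    (by omega)
  rw [alignSuffix_val hj hjN hφ.monotone hφij, alignSuffix_val hj hjN hφ.monotone hφij]
  omega

lemma alignSuffix_zero (hφ : Monotone φ)
    (hφij : (φ ⟨j - 1, Nat.sub_one_lt_of_le hj hjN⟩ : ℕ) = i - 1) :
    (alignSuffix (i := i) hj hjN φ ⟨0, by omega⟩ : ℕ) = 0 := by
  rw [alignSuffix_val hj hjN hφ hφij]
  simp [hφij]

lemma alignSuffix_last (hi : 1 ≤ i) (hφ : Monotone φ)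
    (hφij : (φ ⟨j - 1, Nat.sub_one_lt_of_le hj hjN⟩ : ℕ) = i - 1)
    (hφT : (φ ⟨N - 1, by omega⟩ : ℕ) = T - 1) :
    (alignSuffix (i := i) hj hjN φ ⟨N - j, by omega⟩ : ℕ) = T - i := by
  rw [alignSuffix_val hj hjN hφ hφij]
  simp only [show j - 1 + (N - j) = N - 1 by omega, hφT]
  omega

/-- The factor `c i j` of the shared step `(i, j)` is counted by both halves. -/
lemma mul_prod_eq_prod_alignPrefix_mul_prod_alignSuffix {M : Type*} [CommMonoid M]
    (c : ℕ → ℕ → M) (hi : 1 ≤ i) (hφ : Monotone φ)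
    (hφij : (φ ⟨j - 1, Nat.sub_one_lt_of_le hj hjN⟩ : ℕ) = i - 1) :
    c i j * ∏ k : Fin N, c (φ k + 1) (k + 1) =
      (∏ k : Fin j, c (alignPrefix hi hjN φ k + 1) (k + 1)) *
        ∏ m : Fin (N - j + 1), c (i + alignSuffix (i := i) hj hjN φ m) (j + m) := by
  set F : ℕ → M := fun t => if h : t < N then c (φ ⟨t, h⟩ + 1) (t + 1) else 1
  have hall : ∏ k : Fin N, c (φ k + 1) (k + 1) = ∏ t ∈ range N, F t :=
    prod_fin_eq_prod_range _
  have hprefix :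
      ∏ k : Fin j, c (alignPrefix hi hjN φ k + 1) (k + 1) = ∏ t ∈ range j, F t := by
    rw [← Fin.prod_univ_eq_prod_range]
    refine prod_congr rfl fun k _ => ?_
    simp only [F, dif_pos (k.2.trans_le hjN), alignPrefix_val hj hjN hi hφ hφij]
  have hsuffix : ∏ m : Fin (N - j + 1), c (i + alignSuffix (i := i) hj hjN φ m) (j + m) =
      ∏ t ∈ Ico (j - 1) N, F t := by
    rw [prod_Ico_eq_prod_range, show N - (j - 1) = N - j + 1 by omega,
      ← Fin.prod_univ_eq_prod_range]
    refine prod_congr rfl fun m _ => ?_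
    have := hφ.val_le_val_mk (by omega : j - 1 < N) (by omega : j - 1 + m < N) (by omega)
    simp only [F, dif_pos (by omega : j - 1 + m < N), alignSuffix_val hj hjN hφ hφij]
    congr 1 <;> omega
  have hshared : F (j - 1) = c i j := by
    simp only [F, dif_pos (by omega : j - 1 < N), hφij]
    congr 1 <;> omega
  have := mul_prod_range_eq_prod_range_succ_mul_prod_Ico F (by omega : j - 1 ≤ N)
  rwa [hshared, Nat.sub_add_cancel hj, ← hall, ← hprefix, ← hsuffix] at this

end Through

section Glue

variable (hi : 1 ≤ i) (hiT : i ≤ T) (hj : 1 ≤ j)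
  {α : Fin j → Fin i} {β : Fin (N - j + 1) → Fin (T - i + 1)}

lemma alignGlue_val_of_lt (k : Fin N) (hk : (k : ℕ) < j) :
    (alignGlue hi hiT α β k : ℕ) = α ⟨k, hk⟩ := by
  simp [alignGlue, hk]

lemma alignGlue_val_of_le (hαi : (α ⟨j - 1, by omega⟩ : ℕ) = i - 1)
    (hβ0 : (β ⟨0, by omega⟩ : ℕ) = 0) (k : Fin N) (hk : j - 1 ≤ k) :
    (alignGlue hi hiT α β k : ℕ) = i - 1 + β ⟨k - (j - 1), by omega⟩ := by
  by_cases hkj : (k : ℕ) < j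
  · obtain ⟨k, hkN⟩ := k
    obtain rfl : k = j - 1 := by simp only at hk hkj; omega
    simp only [alignGlue_val_of_lt hi hiT _ hkj, hαi, hβ0, Nat.sub_self, add_zero]
  · simp [alignGlue, hkj]

lemma alignGlue_strictMono (hα : StrictMono α) (hαi : (α ⟨j - 1, by omega⟩ : ℕ) = i - 1)
    (hβ : StrictMono β) (hβ0 : (β ⟨0, by omega⟩ : ℕ) = 0) :
    StrictMono (alignGlue hi hiT α β) := by
  intro a b hab
  rw [Fin.lt_def] at hab ⊢
  by_cases hbj : (b : ℕ) < j
  · rw [alignGlue_val_of_lt hi hiT a (by omega), alignGlue_val_of_lt hi hiT b hbj]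
    exact hα.val_lt_val_mk _ _ hab
  rw [alignGlue_val_of_le hi hiT hj hαi hβ0 b (by omega)]
  by_cases haj : j - 1 ≤ (a : ℕ)
  · rw [alignGlue_val_of_le hi hiT hj hαi hβ0 a haj]
    have := hβ.val_lt_val_mk (by omega) (by omega) (by omega : (a : ℕ) - (j - 1) < b - (j - 1))
    omega
  · rw [alignGlue_val_of_lt hi hiT a (by omega)]
    have := hα.val_lt_val_mk (by omega) (by omega : j - 1 < j) (by omega : (a : ℕ) < j - 1)
    omega

lemma alignGlue_last (hjN : j ≤ N) (hαi : (α ⟨j - 1, by omega⟩ : ℕ) = i - 1)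
    (hβ0 : (β ⟨0, by omega⟩ : ℕ) = 0) (hβT : (β ⟨N - j, by omega⟩ : ℕ) = T - i) :
    (alignGlue hi hiT α β ⟨N - 1, by omega⟩ : ℕ) = T - 1 := by
  rw [alignGlue_val_of_le hi hiT hj hαi hβ0 ⟨N - 1, by omega⟩ (by simp only; omega)]
  simp only [show N - 1 - (j - 1) = N - j by omega, hβT]
  omega

lemma alignGlue_through (hjN : j ≤ N) (hαi : (α ⟨j - 1, by omega⟩ : ℕ) = i - 1) :
    (alignGlue hi hiT α β ⟨j - 1, Nat.sub_one_lt_of_le hj hjN⟩ : ℕ) = i - 1 := by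
  rw [alignGlue_val_of_lt hi hiT _ (by simp only; omega)]
  exact hαi

lemma alignPrefix_alignGlue (hjN : j ≤ N) : alignPrefix hi hjN (alignGlue hi hiT α β) = α := by
  funext k
  apply Fin.ext
  have := (α k).2
  simp only [alignPrefix, alignGlue_val_of_lt hi hiT ⟨k, k.2.trans_le hjN⟩ k.2, Fin.eta]
  omega

lemma alignSuffix_alignGlue (hjN : j ≤ N) (hαi : (α ⟨j - 1, by omega⟩ : ℕ) = i - 1)
    (hβ0 : (β ⟨0, by omega⟩ : ℕ) = 0) :
    alignSuffix hj hjN (alignGlue hi hiT α β) = β := by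
  funext m
  apply Fin.ext
  have := (β m).2
  simp only [alignSuffix,
    alignGlue_val_of_le hi hiT hj hαi hβ0 ⟨j - 1 + m, by omega⟩ (by simp only; omega)]
  simp only [show j - 1 + m - (j - 1) = m by omega, Fin.eta]
  omega

lemma alignGlue_alignPrefix_alignSuffix (hjN : j ≤ N) {φ : Fin N → Fin T} (hφ : Monotone φ)
    (hφij : (φ ⟨j - 1, Nat.sub_one_lt_of_le hj hjN⟩ : ℕ) = i - 1) :
    alignGlue hi hiT (alignPrefix hi hjN φ) (alignSuffix hj hjN φ) = φ := by
  funext k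
  apply Fin.ext
  by_cases hkj : (k : ℕ) < j
  · rw [alignGlue_val_of_lt hi hiT k hkj, alignPrefix_val hj hjN hi hφ hφij]
  · rw [alignGlue_val_of_le hi hiT hj (alignPrefix_last hj hjN hi hφ hφij)
      (alignSuffix_zero hj hjN hφ hφij) k (by omega), alignSuffix_val hj hjN hφ hφij]
    have := hφ.val_le_val_mk (by omega : j - 1 < N) k.2 (by omega)
    simp only [show j - 1 + (k - (j - 1)) = k by omega, Fin.eta] at this ⊢
    omega

end Glue

end Split

theorem mul_sum_alignments_through_eq_fwd_mul_bwd (c : ℕ → ℕ → ℝ) {T N i j : ℕ}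
    (hi : 1 ≤ i) (hiT : i ≤ T) (hj : 1 ≤ j) (hjN : j ≤ N) :
    c i j * ∑ φ ∈ univ.filter (fun φ : Fin N → Fin T => StrictMono φ ∧
        (φ ⟨N - 1, by omega⟩ : ℕ) = T - 1 ∧
          (φ ⟨j - 1, Nat.sub_one_lt_of_le hj hjN⟩ : ℕ) = i - 1),
      ∏ k : Fin N, c (φ k + 1) (k + 1) = fwd c i j * bwd c T N i j := by
  rw [fwd, bwd, sum_mul_sum, ← sum_product', mul_sum]
  refine sum_nbij' (fun φ => (alignPrefix hi hjN φ, alignSuffix hj hjN φ))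
    (fun p => alignGlue hi hiT p.1 p.2) ?_ ?_ ?_ ?_ ?_ <;>
    simp (disch := omega) only [mem_product, mem_filter, mem_univ, true_and,
      Fin.forall_val_eq_imp_iff]
  · rintro φ ⟨hφ, hφT, hφij⟩
    exact ⟨⟨alignPrefix_strictMono hj hjN hi hφ hφij,
        alignPrefix_last hj hjN hi hφ.monotone hφij⟩,
      alignSuffix_strictMono hj hjN hφ hφij, alignSuffix_zero hj hjN hφ.monotone hφij,
      alignSuffix_last hj hjN hi hφ.monotone hφij hφT⟩
  · rintro ⟨α, β⟩ ⟨⟨hα, hαi⟩, hβ, hβ0, hβT⟩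
    exact ⟨alignGlue_strictMono hi hiT hj hα hαi hβ hβ0,
      alignGlue_last hi hiT hj hjN hαi hβ0 hβT, alignGlue_through hi hiT hj hjN hαi⟩
  · rintro φ ⟨hφ, -, hφij⟩
    exact alignGlue_alignPrefix_alignSuffix hi hiT hj hjN hφ.monotone hφij
  · rintro ⟨α, β⟩ ⟨⟨-, hαi⟩, -, hβ0, -⟩
    exact Prod.ext (alignPrefix_alignGlue hi hiT hjN)
      (alignSuffix_alignGlue hi hiT hj hjN hαi hβ0)
  · rintro φ ⟨hφ, -, hφij⟩
    exact mul_prod_eq_prod_alignPrefix_mul_prod_alignSuffix hj hjN c hi hφ.monotone hφij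

lemma gibbs_marginal_eq_fwd_mul_bwd (cost c : ℕ → ℕ → ℝ)
    (hc : ∀ i j, c i j = Real.exp (-cost i j)) (Z : ℝ) {T N i j : ℕ}
    (hi : 1 ≤ i) (hiT : i ≤ T) (hj : 1 ≤ j) (hjN : j ≤ N) :
    ∑ φ ∈ univ.filter (fun φ : Fin N → Fin T => StrictMono φ ∧
        (φ ⟨N - 1, by omega⟩ : ℕ) = T - 1 ∧
          (φ ⟨j - 1, Nat.sub_one_lt_of_le hj hjN⟩ : ℕ) = i - 1),
      Real.exp (-∑ k, cost (φ k + 1) (k + 1)) / Z = fwd c i j * bwd c T N i j / (c i j * Z) := by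
  have hexp (φ : Fin N → Fin T) :
      Real.exp (-∑ k, cost (φ k + 1) (k + 1)) = ∏ k, c (φ k + 1) (k + 1) := by
    simp only [← sum_neg_distrib, Real.exp_sum, hc]
  rw [← sum_div, ← mul_sum_alignments_through_eq_fwd_mul_bwd c hi hiT hj hjN,
    mul_div_mul_left _ _ (by rw [hc]; exact (Real.exp_pos _).ne')]
  simp only [hexp]

/-- In the Gibbs distribution over monotone alignments,
`p(φ) = exp(−∑_k cost(φ k, k)) / Z` with `Z = fwd T N` and `c i j = exp(−cost i j)`:
(1) the marginal probability that `z_j` aligns to `x_i` equals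
`w i j = fwd i j * bwd i j / (c i j * Z)`, and
(2) the expected total cost equals `∑_{i,j} w i j * cost i j`. -/
theorem gibbs_alignment_marginals (cost : ℕ → ℕ → ℝ) (c : ℕ → ℕ → ℝ)
    (hc : ∀ i j, c i j = Real.exp (-cost i j))
    (T N : ℕ) (hN : 1 ≤ N)
    (Z : ℝ) :
    (∀ (i j : ℕ) (_ : 1 ≤ i) (_ : i ≤ T) (_ : 1 ≤ j) (_ : j ≤ N),
      (∑ φ ∈ Finset.univ.filter
          (fun φ : Fin N → Fin T =>
            StrictMono φ ∧ ((φ ⟨N - 1, by omega⟩ : Fin T) : ℕ) = T - 1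
              ∧ ((φ ⟨j - 1, by omega⟩ : Fin T) : ℕ) = i - 1),
        Real.exp (-∑ k : Fin N, cost ((φ k : ℕ) + 1) ((k : ℕ) + 1)) / Z)
        = fwd c i j * bwd c T N i j / (c i j * Z))
    ∧ (∑ φ ∈ Finset.univ.filter
        (fun φ : Fin N → Fin T =>
          StrictMono φ ∧ ((φ ⟨N - 1, by omega⟩ : Fin T) : ℕ) = T - 1),
      (Real.exp (-∑ k : Fin N, cost ((φ k : ℕ) + 1) ((k : ℕ) + 1)) / Z)
        * ∑ k : Fin N, cost ((φ k : ℕ) + 1) ((k : ℕ) + 1))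
      = ∑ i ∈ Finset.Icc 1 T, ∑ j ∈ Finset.Icc 1 N,
          (fwd c i j * bwd c T N i j / (c i j * Z)) * cost i j := by
  refine ⟨fun i j hi hiT hj hjN =>
    gibbs_marginal_eq_fwd_mul_bwd cost c hc Z hi hiT hj hjN, ?_⟩
  rw [sum_mul_sum_eq_sum_sum_fiber_mul _ _ fun (a : Fin T) (k : Fin N) => cost (a + 1) (k + 1),
    sum_comm]
  simp only [sum_Icc_one_eq_sum_fin]
  refine sum_congr rfl fun a _ => sum_congr rfl fun k _ => ?_
  rw [← gibbs_marginal_eq_fwd_mul_bwd cost c hc Z (by omega) (by omega) (by omega) (by omega),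
    filter_filter]
  congr 2
  refine filter_congr fun φ _ => ?_
  simp only [Fin.ext_iff, and_assoc, add_tsub_cancel_right, Fin.eta]
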